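/- The trace-dual of a linear MRD code is MRD: if C ⊆ Mat(k,m,F_q) (k ≤ m) is a linear code attaining the Singleton-like bound, then C⊥ also attains it; moreover, if 1 ≤ dim C ≤ km−1, then d(C) + d(C⊥) = k + 2. -/

import Mathlib

open Matrix Module

/-!
Pair `k × m` matrices by `⟨M, N⟩ = tr (M Nᵀ)`; this form is nondegenerate, so
`dim C + dim C⊥ = km`. If every nonzero matrix of `C` has rank at least `d` and `A` is an
`s × k` matrix of rank `s` with `s + d > k`, then `M ↦ A M` is injective on `C`, since its
kernel consists of matrices of rank at most `k - s`. For `s = k + 1 - d` this is the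
Singleton-like bound `dim C ≤ m (k + 1 - d)`, and for an MRD code the map is onto `Mat(s, m)`.
If `N ∈ C⊥` had rank at most `s`, write `N = Aᵀ V` with `A` of rank `s`; then
`⟨A M, V⟩ = ⟨M, N⟩ = 0` for all `M ∈ C`, so `V ⊥ Mat(s, m)` and `N = 0`. Hence
`d(C⊥) ≥ k + 2 - d`, and the Singleton-like bound for `C⊥`, whose dimension is `m (d - 1)`,
forces equality.
-/

theorem Submodule.exists_le_finrank_eq {K V : Type*} [DivisionRing K] [AddCommGroup V]
    [Module K V] [FiniteDimensional K V] (W₀ : Submodule K V) {s : ℕ}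
    (h₀ : finrank K W₀ ≤ s) (hs : s ≤ finrank K V) :
    ∃ W : Submodule K V, W₀ ≤ W ∧ finrank K W = s := by
  obtain ⟨j, rfl⟩ := Nat.exists_eq_add_of_le h₀
  induction j generalizing W₀ with
  | zero => exact ⟨W₀, le_rfl, rfl⟩
  | succ j ih =>
    obtain ⟨v, hv⟩ := W₀.exists_of_finrank_lt (by omega)
    have hvW₀ : v ∉ W₀ := by simpa using hv 1 one_ne_zero
    have hrank := finrank_sup_span_singleton hvW₀
    obtain ⟨W, hW₀W, hW⟩ := ih (W₀ ⊔ K ∙ v) (by omega) (by omega)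
    exact ⟨W, le_sup_left.trans hW₀W, by omega⟩

namespace Matrix

variable {F ι κ : Type*} [Field F] [Fintype ι] [Fintype κ]

variable (F ι κ) in
def traceForm : LinearMap.BilinForm F (Matrix ι κ F) :=
  LinearMap.mk₂ F (fun M N => (M * Nᵀ).trace)
    (fun _ _ _ => by simp only [Matrix.add_mul, trace_add]) (fun _ _ _ => by simp)
    (fun _ _ _ => by simp only [transpose_add, Matrix.mul_add, trace_add]) (fun _ _ _ => by simp)

@[simp]
theorem traceForm_apply (M N : Matrix ι κ F) : traceForm F ι κ M N = (M * Nᵀ).trace := rfl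

theorem traceForm_comm (M N : Matrix ι κ F) : traceForm F ι κ M N = traceForm F ι κ N M := by
  rw [traceForm_apply, ← trace_transpose, transpose_mul, transpose_transpose, traceForm_apply]

theorem traceForm_single_left [DecidableEq ι] [DecidableEq κ] (i : ι) (j : κ)
    (N : Matrix ι κ F) : traceForm F ι κ (single i j 1) N = N i j := by
  rw [traceForm_apply, trace_single_mul, transpose_apply, one_smul]

theorem traceForm_separatingRight : (traceForm F ι κ).SeparatingRight := by
  classical
  intro N hN
  ext i j
  simpa only [traceForm_single_left, zero_apply] using hN (single i j 1)

theorem traceForm_nondegenerate : (traceForm F ι κ).Nondegenerate :=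
  ⟨fun M hM => traceForm_separatingRight M fun N => by rw [traceForm_comm]; exact hM N,
    traceForm_separatingRight⟩

theorem finrank_traceForm_orthogonal (C : Submodule F (Matrix ι κ F)) :
    finrank F ((traceForm F ι κ).orthogonal C) =
      Fintype.card ι * Fintype.card κ - finrank F C := by
  rw [LinearMap.BilinForm.finrank_orthogonal traceForm_nondegenerate, finrank_matrix,
    finrank_self, mul_one]

theorem exists_eq_transpose_mul {s : ℕ} (N : Matrix ι κ F) (hN : N.rank ≤ s)
    (hs : s ≤ Fintype.card ι) :
    ∃ (A : Matrix (Fin s) ι F) (V : Matrix (Fin s) κ F), A.rank = s ∧ N = Aᵀ * V := by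
  obtain ⟨W, hNW, hW⟩ := (Submodule.span F (Set.range N.col)).exists_le_finrank_eq
    (N.rank_eq_finrank_span_cols ▸ hN) (by simpa using hs)
  let b := finBasisOfFinrankEq F W hW
  have hcol (j : κ) : N.col j ∈ W := hNW (Submodule.subset_span ⟨j, rfl⟩)
  refine ⟨.of fun i => b i, .of fun i j => b.repr ⟨N.col j, hcol j⟩ i, ?_, ?_⟩
  · exact ((b.linearIndependent.map' W.subtype W.ker_subtype).rank_matrix).trans
      (Fintype.card_fin s)
  · ext p q
    have := congr_arg (fun w : W => (w : ι → F) p) (b.sum_repr ⟨N.col q, hcol q⟩)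
    simp only [Submodule.coe_sum, Submodule.coe_smul, Finset.sum_apply, Pi.smul_apply,
      smul_eq_mul] at this
    rw [show N p q = N.col q p from rfl, ← this]
    simp [mul_apply, mul_comm]

theorem traceForm_mul_left {σ : Type*} [Fintype σ] (A : Matrix σ ι F) (M : Matrix ι κ F)
    (V : Matrix σ κ F) : traceForm F σ κ (A * M) V = traceForm F ι κ M (Aᵀ * V) := by
  rw [traceForm_apply, traceForm_apply, transpose_mul, transpose_transpose, Matrix.mul_assoc,
    trace_mul_comm, ← Matrix.mul_assoc]

end Matrix

section RankMetricCode

variable {F ι κ : Type*} [Field F] [Fintype κ]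

/-- For the zero code the set is empty and this is `0`. -/
noncomputable def minRankDist (C : Submodule F (Matrix ι κ F)) : ℕ :=
  sInf {r : ℕ | ∃ M ∈ C, M ≠ 0 ∧ M.rank = r}

variable {C : Submodule F (Matrix ι κ F)}

theorem minRankDist_le_rank {M : Matrix ι κ F} (hM : M ∈ C) (hM0 : M ≠ 0) :
    minRankDist C ≤ M.rank :=
  Nat.sInf_le ⟨M, hM, hM0, rfl⟩

theorem exists_rank_eq_minRankDist (hC : C ≠ ⊥) : ∃ M ∈ C, M ≠ 0 ∧ M.rank = minRankDist C := by
  obtain ⟨M, hM, hM0⟩ := Submodule.exists_mem_ne_zero_of_ne_bot hC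
  exact Nat.sInf_mem (s := {r | ∃ M ∈ C, M ≠ 0 ∧ M.rank = r}) ⟨M.rank, M, hM, hM0, rfl⟩

variable [Fintype ι]

def IsMRD (C : Submodule F (Matrix ι κ F)) : Prop :=
  finrank F C = 0 ∨ finrank F C = Fintype.card ι * Fintype.card κ ∨
    finrank F C = Fintype.card κ * (Fintype.card ι + 1 - minRankDist C)

theorem injective_mulLeftLinearMap_comp_subtype {σ : Type*} [Fintype σ] {d : ℕ}
    (hC : ∀ M ∈ C, M ≠ 0 → d ≤ M.rank) (A : Matrix σ ι F) (hA : Fintype.card ι < A.rank + d) :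
    Function.Injective (mulLeftLinearMap κ F A ∘ₗ C.subtype) := by
  rw [← LinearMap.ker_eq_bot, LinearMap.ker_eq_bot']
  rintro ⟨M, hM⟩ hAM
  by_contra hM0
  have := rank_add_rank_le_card_of_mul_eq_zero (show A * M = 0 from hAM)
  have := hC M hM fun h => hM0 (Subtype.ext h)
  omega

theorem finrank_le_of_forall_le_rank {d : ℕ} (hC : ∀ M ∈ C, M ≠ 0 → d ≤ M.rank) (hd : 0 < d) :
    finrank F C ≤ Fintype.card κ * (Fintype.card ι + 1 - d) := by
  obtain ⟨A, -, hA, -⟩ := exists_eq_transpose_mul (s := Fintype.card ι + 1 - d) (0 : Matrix ι κ F)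
    (by rw [rank_zero]; exact Nat.zero_le _) (by omega)
  have := LinearMap.finrank_le_finrank_of_injective
    (injective_mulLeftLinearMap_comp_subtype hC A (by omega))
  simpa [finrank_matrix, mul_comm] using this

theorem le_rank_of_mem_traceForm_orthogonal {d : ℕ} (hC : ∀ M ∈ C, M ≠ 0 → d ≤ M.rank)
    (hd : 0 < d) (hdim : finrank F C = Fintype.card κ * (Fintype.card ι + 1 - d))
    {N : Matrix ι κ F} (hN : N ∈ (traceForm F ι κ).orthogonal C) (hN0 : N ≠ 0) :
    Fintype.card ι + 2 - d ≤ N.rank := by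
  by_contra! hlt
  obtain ⟨A, V, hA, rfl⟩ := exists_eq_transpose_mul (s := Fintype.card ι + 1 - d) N
    (by omega) (by omega)
  have hsurj : Function.Surjective (mulLeftLinearMap κ F A ∘ₗ C.subtype) := by
    refine (LinearMap.injective_iff_surjective_of_finrank_eq_finrank ?_).mp
      (injective_mulLeftLinearMap_comp_subtype hC A (by omega))
    simp [hdim, finrank_matrix, mul_comm]
  refine hN0 ?_
  rw [traceForm_separatingRight V fun X => ?_, Matrix.mul_zero]
  obtain ⟨⟨M, hM⟩, rfl⟩ := hsurj X
  rw [LinearMap.comp_apply, mulLeftLinearMap_apply, traceForm_mul_left]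
  exact LinearMap.BilinForm.mem_orthogonal_iff.mp hN M hM

theorem finrank_traceForm_orthogonal_of_finrank_eq {d : ℕ} (hd : 0 < d)
    (hdι : d ≤ Fintype.card ι + 1)
    (hdim : finrank F C = Fintype.card κ * (Fintype.card ι + 1 - d)) :
    finrank F ((traceForm F ι κ).orthogonal C) = Fintype.card κ * (d - 1) := by
  have hsplit : Fintype.card ι * Fintype.card κ =
      Fintype.card κ * (d - 1) + Fintype.card κ * (Fintype.card ι + 1 - d) := by
    rw [← Nat.mul_add, mul_comm]
    congr 1
    omega
  rw [finrank_traceForm_orthogonal, hdim, hsplit, Nat.add_sub_cancel]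

theorem minRankDist_mem_Icc_of_finrank_eq (hpos : 0 < finrank F C)
    (hlt : finrank F C < Fintype.card ι * Fintype.card κ)
    (hdim : finrank F C = Fintype.card κ * (Fintype.card ι + 1 - minRankDist C)) :
    minRankDist C ∈ Set.Icc 2 (Fintype.card ι) := by
  have hd := Nat.pos_of_mul_pos_left (hdim ▸ hpos)
  refine ⟨?_, by omega⟩
  by_contra! hd1
  have : Fintype.card κ * Fintype.card ι ≤ finrank F C :=
    hdim ▸ Nat.mul_le_mul_left _ (by omega)
  rw [mul_comm] at this
  omega

theorem minRankDist_add_minRankDist_traceForm_orthogonal (hpos : 0 < finrank F C)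
    (hlt : finrank F C < Fintype.card ι * Fintype.card κ)
    (hdim : finrank F C = Fintype.card κ * (Fintype.card ι + 1 - minRankDist C)) :
    minRankDist C + minRankDist ((traceForm F ι κ).orthogonal C) = Fintype.card ι + 2 := by
  obtain ⟨hd2, hdι⟩ := minRankDist_mem_Icc_of_finrank_eq hpos hlt hdim
  have hκ : 0 < Fintype.card κ := Nat.pos_of_mul_pos_right (hdim ▸ hpos)
  have hdim' := finrank_traceForm_orthogonal_of_finrank_eq (by omega) (by omega) hdim
  have hC' : (traceForm F ι κ).orthogonal C ≠ ⊥ := by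
    intro hbot
    rw [hbot, finrank_bot] at hdim'
    exact (Nat.mul_pos hκ (by omega)).ne hdim'
  obtain ⟨N, hN, hN0, hNrank⟩ := exists_rank_eq_minRankDist hC'
  have hlower :
      Fintype.card ι + 2 - minRankDist C ≤ minRankDist ((traceForm F ι κ).orthogonal C) :=
    hNrank ▸ le_rank_of_mem_traceForm_orthogonal (fun _ => minRankDist_le_rank) (by omega)
      hdim hN hN0
  have hupper := hdim' ▸ finrank_le_of_forall_le_rank (fun _ => minRankDist_le_rank)
    (by omega : 0 < minRankDist ((traceForm F ι κ).orthogonal C))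
  have := Nat.le_of_mul_le_mul_left hupper hκ
  omega

theorem IsMRD.traceForm_orthogonal (hC : IsMRD C) : IsMRD ((traceForm F ι κ).orthogonal C) := by
  have hdual := finrank_traceForm_orthogonal C
  have hle : finrank F C ≤ Fintype.card ι * Fintype.card κ := by
    simpa [finrank_matrix] using C.finrank_le
  rcases Nat.eq_zero_or_pos (finrank F C) with h0 | hpos
  · exact Or.inr (Or.inl (by omega))
  rcases hle.eq_or_lt with hfull | hlt
  · exact Or.inl (by omega)
  have hdim : finrank F C = Fintype.card κ * (Fintype.card ι + 1 - minRankDist C) := by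
    rcases hC with h | h | h <;> omega
  obtain ⟨hd2, hdι⟩ := minRankDist_mem_Icc_of_finrank_eq hpos hlt hdim
  have hsum := minRankDist_add_minRankDist_traceForm_orthogonal hpos hlt hdim
  refine Or.inr (Or.inr ?_)
  rw [finrank_traceForm_orthogonal_of_finrank_eq (by omega) (by omega) hdim]
  congr 1
  omega

end RankMetricCode

theorem dual_of_MRD_is_MRD_general (F : Type*) [Field F] (k m : ℕ)
    (C Cperp : Submodule F (Matrix (Fin k) (Fin m) F))
    (hperp : (Cperp : Set (Matrix (Fin k) (Fin m) F)) = {N | ∀ M ∈ C, (M * Nᵀ).trace = 0})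
    (d dperp : ℕ)
    (hd : d = sInf {r : ℕ | ∃ M ∈ C, M ≠ 0 ∧ M.rank = r})
    (hdp : dperp = sInf {r : ℕ | ∃ N ∈ Cperp, N ≠ 0 ∧ N.rank = r})
    (hMRD : finrank F C = 0 ∨ finrank F C = k * m ∨ finrank F C = m * (k + 1 - d)) :
    (finrank F Cperp = 0 ∨ finrank F Cperp = k * m ∨
        finrank F Cperp = m * (k + 1 - dperp)) ∧
      (1 ≤ finrank F C → finrank F C ≤ k * m - 1 → d + dperp = k + 2) := by
  obtain rfl : Cperp = (traceForm F (Fin k) (Fin m)).orthogonal C := by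
    ext N
    rw [← SetLike.mem_coe, hperp, LinearMap.BilinForm.mem_orthogonal_iff]
    rfl
  change d = minRankDist C at hd
  change dperp = minRankDist _ at hdp
  subst hd hdp
  have hC : IsMRD C := by simpa [IsMRD] using hMRD
  refine ⟨by simpa [IsMRD] using hC.traceForm_orthogonal, fun hpos hlt => ?_⟩
  have hdim : finrank F C = m * (k + 1 - minRankDist C) := by
    rcases hMRD with h | h | h <;> omega
  simpa using minRankDist_add_minRankDist_traceForm_orthogonal hpos (by simp; omega)
    (by simpa using hdim)

/-- The trace-dual of a linear MRD code is MRD; moreover, if `1 ≤ dim C ≤ km - 1`,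
then `d(C) + d(C⊥) = k + 2`. A linear code of minimum distance `d` is MRD when its
dimension is `m(k - d + 1)` (codes of dimension `0` or `km` are MRD by convention). -/
theorem dual_of_MRD_is_MRD (F : Type*) [Field F] [Fintype F] (k m : ℕ) (hkm : k ≤ m)
    (C Cperp : Submodule F (Matrix (Fin k) (Fin m) F))
    (hperp : (Cperp : Set (Matrix (Fin k) (Fin m) F)) = {N | ∀ M ∈ C, (M * Nᵀ).trace = 0})
    (d dperp : ℕ)
    (hd : d = sInf {r : ℕ | ∃ M ∈ C, M ≠ 0 ∧ M.rank = r})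
    (hdp : dperp = sInf {r : ℕ | ∃ N ∈ Cperp, N ≠ 0 ∧ N.rank = r})
    (hMRD : finrank F C = 0 ∨ finrank F C = k * m ∨ finrank F C = m * (k + 1 - d)) :
    (finrank F Cperp = 0 ∨ finrank F Cperp = k * m ∨
        finrank F Cperp = m * (k + 1 - dperp)) ∧
      (1 ≤ finrank F C → finrank F C ≤ k * m - 1 → d + dperp = k + 2) :=
  dual_of_MRD_is_MRD_general F k m C Cperp hperp d dperp hd hdp hMRD
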